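/- arXiv:1612.01348 — 4 statements merged into one kernel-verified Lean document; each statement's English description precedes it below -/
import Mathlib

section
/- Let A be an N×N positive definite Hermitian matrix and ε ∈ (0,1). If tr A ≤ N + ε and det A ≥ 1 − ε, then there exists a constant C_N depending only on N such that ‖A − I‖ ≤ C_N √ε, where ‖·‖ denotes the Hilbert–Schmidt (Frobenius) norm and I is the N×N identity matrix. -/
open scoped ComplexOrder Matrix

-- pointwise inequality: for 0 < x ≤ B, 1 ≤ B: (x-1)^2 ≤ (√B+1)^2 (x - 1 - log x)
lemma ptwise_aux {x B : ℝ} (hx : 0 < x) (hxB : x ≤ B) (hB : 1 ≤ B) :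
    (x - 1)^2 ≤ (Real.sqrt B + 1)^2 * (x - 1 - Real.log x) := by
  have hsx : Real.sqrt x ^ 2 = x := Real.sq_sqrt hx.le
  have hlog : Real.log x ≤ 2 * (Real.sqrt x - 1) := by
    have h1 : Real.log (Real.sqrt x) ≤ Real.sqrt x - 1 :=
      Real.log_le_sub_one_of_pos (Real.sqrt_pos.2 hx)
    have h2 : Real.log x = 2 * Real.log (Real.sqrt x) := by
      rw [show (2:ℝ) * Real.log (Real.sqrt x) = Real.log (Real.sqrt x ^ 2) by
        rw [Real.log_pow]; push_cast; ring, hsx]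
    linarith
  have hf : (Real.sqrt x - 1)^2 ≤ x - 1 - Real.log x := by nlinarith
  have hsb : Real.sqrt x ≤ Real.sqrt B := Real.sqrt_le_sqrt hxB
  have hsx0 : 0 ≤ Real.sqrt x := Real.sqrt_nonneg x
  have key : (x - 1)^2 = (Real.sqrt x - 1)^2 * (Real.sqrt x + 1)^2 := by nlinarith
  have h3 : (Real.sqrt x + 1)^2 ≤ (Real.sqrt B + 1)^2 := by nlinarith
  calc (x-1)^2 = (Real.sqrt x - 1)^2 * (Real.sqrt x + 1)^2 := key
    _ ≤ (x - 1 - Real.log x) * (Real.sqrt B + 1)^2 := by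
        apply mul_le_mul hf h3 (by positivity) (by nlinarith)
    _ = (Real.sqrt B + 1)^2 * (x - 1 - Real.log x) := mul_comm _ _

lemma eigen_key_aux (N : ℕ) (lam : Fin N → ℝ) (hpos : ∀ i, 0 < lam i) (ε : ℝ)
    (hε0 : 0 < ε) (hε1 : ε < 1) (htr : ∑ i, lam i ≤ (N : ℝ) + ε)
    (hdet : 1 - ε ≤ ∏ i, lam i) :
    ∑ i, (lam i - 1)^2 ≤ (2*(((N:ℝ)+1)^2+N) + 3*((N:ℝ)+2)^2) * ε := by
  rcases le_or_gt (1/2 : ℝ) ε with hhalf | hhalf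
  · -- crude bound
    have hb : ∀ i, lam i ≤ (N : ℝ) + 1 := by
      intro i
      have : lam i ≤ ∑ j, lam j :=
        Finset.single_le_sum (fun j _ => (hpos j).le) (Finset.mem_univ i)
      linarith
    have hsq : ∀ i, (lam i - 1)^2 ≤ (lam i) * ((N:ℝ)+1) + 1 := by
      intro i; nlinarith [hpos i, hb i]
    calc ∑ i, (lam i - 1)^2 ≤ ∑ i, ((lam i) * ((N:ℝ)+1) + 1) :=
          Finset.sum_le_sum fun i _ => hsq i
      _ = (∑ i, lam i) * ((N:ℝ)+1) + N := by
          rw [Finset.sum_add_distrib, ← Finset.sum_mul]; simp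
      _ ≤ ((N:ℝ)+1) * ((N:ℝ)+1) + N := by nlinarith
      _ ≤ (2*((N:ℝ)+1)^2+2*N) * ε := by nlinarith
      _ ≤ (2*(((N:ℝ)+1)^2+N) + 3*((N:ℝ)+2)^2) * ε := by nlinarith
  · -- fine bound
    have hB : (1:ℝ) ≤ (N:ℝ) + 1 := by
      have := Nat.cast_nonneg (α := ℝ) N; linarith
    have hb : ∀ i, lam i ≤ (N : ℝ) + 1 := by
      intro i
      have : lam i ≤ ∑ j, lam j :=
        Finset.single_le_sum (fun j _ => (hpos j).le) (Finset.mem_univ i)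
      linarith
    have hK : (Real.sqrt ((N:ℝ)+1) + 1)^2 ≤ ((N:ℝ)+2)^2 := by
      have h1 : Real.sqrt ((N:ℝ)+1) ≤ (N:ℝ)+1 := by
        nlinarith [Real.sq_sqrt (by positivity : (0:ℝ) ≤ (N:ℝ)+1),
          Real.sqrt_nonneg ((N:ℝ)+1)]
      nlinarith [Real.sqrt_nonneg ((N:ℝ)+1)]
    have hsum : ∑ i, (lam i - 1)^2 ≤
        ((N:ℝ)+2)^2 * ∑ i, (lam i - 1 - Real.log (lam i)) := by
      rw [Finset.mul_sum]
      apply Finset.sum_le_sum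
      intro i _
      calc (lam i - 1)^2 ≤ (Real.sqrt ((N:ℝ)+1) + 1)^2 * (lam i - 1 - Real.log (lam i)) :=
            ptwise_aux (hpos i) (hb i) hB
        _ ≤ ((N:ℝ)+2)^2 * (lam i - 1 - Real.log (lam i)) := by
            apply mul_le_mul_of_nonneg_right hK
            nlinarith [Real.log_le_sub_one_of_pos (hpos i)]
    have hlogprod : Real.log (∏ i, lam i) = ∑ i, Real.log (lam i) :=
      Real.log_prod (fun i _ => (hpos i).ne')
    have hlogdet : Real.log (1 - ε) ≤ ∑ i, Real.log (lam i) := by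
      rw [← hlogprod]
      exact Real.log_le_log (by linarith) hdet
    have hloglb : -(2*ε) ≤ Real.log (1 - ε) := by
      have := Real.one_sub_inv_le_log_of_pos (x := 1 - ε) (by linarith)
      have hinv : (1-ε)⁻¹ ≤ 1 + 2*ε := by
        rw [inv_le_iff_one_le_mul₀ (by linarith)]; nlinarith
      linarith
    have hsum2 : ∑ i, (lam i - 1 - Real.log (lam i)) ≤ 3 * ε := by
      have : ∑ i, (lam i - 1 - Real.log (lam i))
          = (∑ i, lam i) - N - ∑ i, Real.log (lam i) := by
        simp [Finset.sum_sub_distrib]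
      rw [this]; linarith
    calc ∑ i, (lam i - 1)^2 ≤ ((N:ℝ)+2)^2 * (3*ε) := by
          apply hsum.trans
          apply mul_le_mul_of_nonneg_left hsum2 (by positivity)
      _ ≤ (2*(((N:ℝ)+1)^2+N) + 3*((N:ℝ)+2)^2) * ε := by nlinarith

lemma sum_abs_sq_aux {N : ℕ} (M : Matrix (Fin N) (Fin N) ℂ) :
    (∑ i, ∑ j, ‖M i j‖^2 : ℝ) = (Matrix.trace (M * Mᴴ)).re := by
  simp only [Matrix.trace, Matrix.diag, Matrix.mul_apply, Matrix.conjTranspose_apply,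
    RCLike.star_def, Complex.mul_conj, Complex.re_sum]
  simp [Complex.sq_norm]

lemma frob_eq_aux {N : ℕ} (A : Matrix (Fin N) (Fin N) ℂ) (hA : A.IsHermitian) :
    (∑ i, ∑ j, ‖A i j - (1 : Matrix (Fin N) (Fin N) ℂ) i j‖^2 : ℝ)
      = ∑ i, (hA.eigenvalues i - 1)^2 := by
  simp only [← Matrix.sub_apply]
  set U : Matrix (Fin N) (Fin N) ℂ := (hA.eigenvectorUnitary : Matrix (Fin N) (Fin N) ℂ)
  have hU : U * star U = 1 := (Matrix.mem_unitaryGroup_iff).mp hA.eigenvectorUnitary.2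
  have hU' : star U * U = 1 := (Matrix.mem_unitaryGroup_iff').mp hA.eigenvectorUnitary.2
  set d : Fin N → ℂ := fun i => (hA.eigenvalues i : ℂ) - 1
  have hM : A - 1 = U * Matrix.diagonal d * star U := by
    have h1 : A = U * Matrix.diagonal ((↑) ∘ hA.eigenvalues) * star U := hA.spectral_theorem
    have hd : Matrix.diagonal d = Matrix.diagonal ((↑) ∘ hA.eigenvalues) - 1 := by
      rw [← Matrix.diagonal_one, ← Matrix.diagonal_sub]; rfl
    have h3 : U * Matrix.diagonal d * star U = A - 1 := by
      rw [hd, mul_sub, mul_one, sub_mul, hU, ← h1]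
    exact h3.symm
  rw [sum_abs_sq_aux, hM]
  have hMH : (U * Matrix.diagonal d * star U)ᴴ = U * (Matrix.diagonal d)ᴴ * star U := by
    simp [Matrix.conjTranspose_mul, mul_assoc, ← Matrix.star_eq_conjTranspose, star_star]
  rw [hMH]
  have : U * Matrix.diagonal d * star U * (U * (Matrix.diagonal d)ᴴ * star U)
      = U * (Matrix.diagonal d * (Matrix.diagonal d)ᴴ) * star U := by
    simp only [mul_assoc]
    rw [← mul_assoc (star U) U, hU', one_mul]
  rw [this, Matrix.trace_mul_cycle, ← mul_assoc, hU', one_mul,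
    Matrix.diagonal_conjTranspose, Matrix.diagonal_mul_diagonal, Matrix.trace_diagonal]
  simp only [Pi.star_apply, RCLike.star_def, Complex.mul_conj, Complex.re_sum]
  congr 1; ext i
  simp only [d, Complex.normSq_apply]
  push_cast
  simp [Complex.normSq_apply]
  ring

lemma trace_re_aux {N : ℕ} (A : Matrix (Fin N) (Fin N) ℂ) (hA : A.IsHermitian) :
    (A.trace).re = ∑ i, hA.eigenvalues i := by
  set U : Matrix (Fin N) (Fin N) ℂ := (hA.eigenvectorUnitary : Matrix (Fin N) (Fin N) ℂ)
  have hU' : star U * U = 1 := (Matrix.mem_unitaryGroup_iff').mp hA.eigenvectorUnitary.2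
  have h1 : A = U * Matrix.diagonal ((↑) ∘ hA.eigenvalues) * star U := hA.spectral_theorem
  have h2 : A.trace = ∑ i, (hA.eigenvalues i : ℂ) := by
    conv_lhs => rw [h1]
    rw [Matrix.trace_mul_cycle, hU', one_mul, Matrix.trace_diagonal]
    simp
  rw [h2, Complex.re_sum]
  simp

lemma det_re_aux {N : ℕ} (A : Matrix (Fin N) (Fin N) ℂ) (hA : A.IsHermitian) :
    (A.det).re = ∏ i, hA.eigenvalues i := by
  rw [hA.det_eq_prod_eigenvalues]
  norm_cast

/-- Lemma 2.6 of Tosatti–Weinkove–Yang (quoted in the paper): if an `N × N`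
positive definite Hermitian matrix `A` satisfies `tr A ≤ N + ε` and
`det A ≥ 1 - ε` for some `ε ∈ (0,1)`, then `‖A - I‖ ≤ C_N √ε` in the
Hilbert–Schmidt (Frobenius) norm, where `C_N` depends only on `N`. -/
theorem matrix_close_to_identity (N : ℕ) :
    ∃ C : ℝ, 0 < C ∧
      ∀ (A : Matrix (Fin N) (Fin N) ℂ) (ε : ℝ),
        A.IsHermitian → A.PosDef → 0 < ε → ε < 1 →
        (A.trace).re ≤ (N : ℝ) + ε → 1 - ε ≤ (A.det).re →
        Real.sqrt (∑ i, ∑ j, ‖A i j - (1 : Matrix (Fin N) (Fin N) ℂ) i j‖ ^ 2)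
          ≤ C * Real.sqrt ε := by
  set Csq : ℝ := 2*(((N:ℝ)+1)^2+N) + 3*((N:ℝ)+2)^2 with hCsq
  have hCsqpos : 0 < Csq := by positivity
  refine ⟨Real.sqrt Csq, Real.sqrt_pos.2 hCsqpos, ?_⟩
  intro A ε hA hP hε0 hε1 htr hdet
  have hpos : ∀ i, 0 < hA.eigenvalues i := fun i => hP.eigenvalues_pos i
  have htr' : ∑ i, hA.eigenvalues i ≤ (N : ℝ) + ε := by
    rw [← trace_re_aux A hA]; exact htr
  have hdet' : 1 - ε ≤ ∏ i, hA.eigenvalues i := by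
    rw [← det_re_aux A hA]; exact hdet
  have hkey := eigen_key_aux N hA.eigenvalues hpos ε hε0 hε1 htr' hdet'
  rw [frob_eq_aux A hA]
  calc Real.sqrt (∑ i, (hA.eigenvalues i - 1)^2) ≤ Real.sqrt (Csq * ε) :=
        Real.sqrt_le_sqrt (by rw [hCsq]; exact hkey)
    _ = Real.sqrt Csq * Real.sqrt ε := Real.sqrt_mul hCsqpos.le ε
end

section
/- Let λ_1, …, λ_N be positive real numbers and ε ∈ (0,1). If Σ_i λ_i ≤ N + ε and Π_i λ_i ≥ 1 − ε, then there is a constant C_N depending only on N such that Σ_i (λ_i − 1)² ≤ C_N ε. -/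
/-- Key pointwise inequality: for `0 < x ≤ M` with `1 ≤ M`,
`(x-1)^2 ≤ 4M (x - 1 - log x)`. -/
lemma key_ineq (x M : ℝ) (hx : 0 < x) (hxM : x ≤ M) (hM : 1 ≤ M) :
    (x - 1) ^ 2 ≤ 4 * M * (x - 1 - Real.log x) := by
  set s := Real.sqrt x with hs
  set t := Real.sqrt M with ht
  have hs0 : 0 < s := Real.sqrt_pos.2 hx
  have hsq : s ^ 2 = x := Real.sq_sqrt hx.le
  have htq : t ^ 2 = M := Real.sq_sqrt (by linarith)
  have ht1 : 1 ≤ t := by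
    rw [ht, show (1:ℝ) = Real.sqrt 1 by simp]
    exact Real.sqrt_le_sqrt hM
  have hst : s ≤ t := Real.sqrt_le_sqrt hxM
  have hlog : Real.log x ≤ 2 * (s - 1) := by
    have h1 := Real.log_le_sub_one_of_pos hs0
    have h2 : Real.log s = Real.log x / 2 := Real.log_sqrt hx.le
    linarith
  nlinarith [sq_nonneg (s - 1), sq_nonneg (s + 1), sq_nonneg (s - t),
    mul_nonneg (sq_nonneg (s - 1)) (sub_nonneg.2 hst),
    mul_nonneg (mul_nonneg hs0.le hs0.le) (sub_nonneg.2 ht1)]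

/-- Eigenvalue version of Lemma 2.6 of Tosatti–Weinkove–Yang: if positive reals
`λ₁, …, λ_N` satisfy `∑ λᵢ ≤ N + ε` and `∏ λᵢ ≥ 1 - ε` for some `ε ∈ (0,1)`,
then `∑ (λᵢ - 1)² ≤ C_N ε` with `C_N` depending only on `N`. -/
theorem eigenvalues_close_to_one (N : ℕ) :
    ∃ C : ℝ, 0 < C ∧
      ∀ (lam : Fin N → ℝ) (ε : ℝ),
        (∀ i, 0 < lam i) → 0 < ε → ε < 1 →
        ∑ i, lam i ≤ (N : ℝ) + ε → 1 - ε ≤ ∏ i, lam i →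
        ∑ i, (lam i - 1) ^ 2 ≤ C * ε := by
  refine ⟨2 * N * (N + 1) ^ 2 + 12 * (N + 1), by positivity, ?_⟩
  intro lam ε hpos hε0 hε1 hsum hprod
  have hNn : (0:ℝ) ≤ N := Nat.cast_nonneg N
  have hMi : ∀ i, lam i ≤ (N : ℝ) + 1 := by
    intro i
    have := Finset.single_le_sum (f := lam) (fun j _ => (hpos j).le) (Finset.mem_univ i)
    linarith
  by_cases hhalf : ε < 1 / 2
  · -- small ε: use the log inequality
    have hkey : ∀ i ∈ Finset.univ, (lam i - 1) ^ 2 ≤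
        4 * ((N : ℝ) + 1) * (lam i - 1 - Real.log (lam i)) :=
      fun i _ => key_ineq _ _ (hpos i) (hMi i) (by linarith)
    have h1 := Finset.sum_le_sum hkey
    have hsplit : ∑ i, 4 * ((N : ℝ) + 1) * (lam i - 1 - Real.log (lam i)) =
        4 * ((N : ℝ) + 1) * ((∑ i, lam i) - N - ∑ i, Real.log (lam i)) := by
      rw [← Finset.mul_sum]
      congr 1
      rw [Finset.sum_sub_distrib, Finset.sum_sub_distrib, Finset.sum_const,
        Finset.card_univ, Fintype.card_fin, nsmul_eq_mul, mul_one]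
    have hlogprod : ∑ i, Real.log (lam i) = Real.log (∏ i, lam i) :=
      (Real.log_prod (fun i _ => (hpos i).ne')).symm
    have hloglb : -(2 * ε) ≤ Real.log (1 - ε) := by
      have hinvpos : 0 < (1 - ε)⁻¹ := by
        apply inv_pos.2; linarith
      have h2 := Real.log_le_sub_one_of_pos hinvpos
      rw [Real.log_inv] at h2
      have h3 : (1 - ε)⁻¹ ≤ 1 + 2 * ε := by
        rw [inv_le_comm₀ (by linarith) (by linarith)]
        rw [inv_le_iff_one_le_mul₀ (by linarith)] at *
        nlinarith
      linarith
    have hlogmono : Real.log (1 - ε) ≤ Real.log (∏ i, lam i) :=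
      Real.log_le_log (by linarith) hprod
    have hsumlog : -(2 * ε) ≤ ∑ i, Real.log (lam i) := by
      rw [hlogprod]; linarith
    have : ∑ i, (lam i - 1) ^ 2 ≤ 4 * ((N : ℝ) + 1) * (3 * ε) := by
      rw [hsplit] at h1
      nlinarith
    nlinarith [mul_nonneg (mul_nonneg (mul_nonneg (by norm_num : (0:ℝ) ≤ 2) hNn)
      (sq_nonneg ((N:ℝ) + 1))) hε0.le]
  · -- large ε: crude bound
    push_neg at hhalf
    have hterm : ∀ i ∈ Finset.univ, (lam i - 1) ^ 2 ≤ ((N : ℝ) + 1) ^ 2 := by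
      intro i _
      have h1 := hpos i
      have h2 := hMi i
      nlinarith
    have h1 := Finset.sum_le_sum hterm
    rw [Finset.sum_const, Finset.card_univ, Fintype.card_fin, nsmul_eq_mul] at h1
    nlinarith [mul_nonneg (mul_nonneg (by norm_num : (0:ℝ) ≤ 12) (by linarith : (0:ℝ) ≤ (N:ℝ)+1)) hε0.le,
      mul_nonneg (mul_nonneg hNn (sq_nonneg ((N:ℝ)+1))) (by linarith : (0:ℝ) ≤ 2*ε - 1)]
end

section
/- Let A and B be n×n positive definite Hermitian matrices. Then tr(B⁻¹A) ≤ (n−1)! · (tr(A⁻¹B))^{n−1} · (det A / det B). -/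
open scoped ComplexOrder

open Finset in
lemma aux_esym_le {ι : Type*} [DecidableEq ι] (s : Finset ι) (hs : s.Nonempty)
    (x : ι → ℝ) (hx : ∀ i ∈ s, 0 < x i) :
    ∑ i ∈ s, ∏ j ∈ s.erase i, x j ≤ (∑ i ∈ s, x i) ^ (s.card - 1) := by
  induction hs using Finset.Nonempty.cons_induction with
  | singleton a => simp
  | cons a t ha ht ih =>
    have hxt : ∀ i ∈ t, 0 < x i := fun i hi => hx i (mem_cons_of_mem hi)
    have hxa : 0 < x a := hx a (mem_cons_self a t)
    set S := ∑ i ∈ t, x i with hS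
    have hS0 : 0 < S := Finset.sum_pos hxt ht
    have hle : ∀ j ∈ t, x j ≤ S := fun j hj =>
      Finset.single_le_sum (fun i hi => (hxt i hi).le) hj
    have hm : 1 ≤ t.card := Finset.one_le_card.mpr ht
    have hcard : (cons a t ha).card - 1 = t.card := by
      rw [Finset.card_cons]; omega
    rw [Finset.sum_cons, Finset.sum_cons, hcard, Finset.erase_cons]
    have h1 : ∏ j ∈ t, x j ≤ S ^ t.card := by
      calc ∏ j ∈ t, x j ≤ ∏ j ∈ t, S :=
            Finset.prod_le_prod (fun i hi => (hxt i hi).le) hle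
        _ = S ^ t.card := by rw [Finset.prod_const]
    have h2 : ∑ i ∈ t, ∏ j ∈ (cons a t ha).erase i, x j ≤ x a * S ^ (t.card - 1) := by
      have : ∀ i ∈ t, ∏ j ∈ (cons a t ha).erase i, x j = x a * ∏ j ∈ t.erase i, x j := by
        intro i hi
        have hia : i ≠ a := fun h => ha (h ▸ hi)
        rw [Finset.cons_eq_insert, Finset.erase_insert_of_ne hia.symm,
          Finset.prod_insert (fun h => ha (Finset.mem_of_mem_erase h))]
      rw [Finset.sum_congr rfl this, ← Finset.mul_sum]
      exact mul_le_mul_of_nonneg_left (ih hxt) hxa.le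
    obtain ⟨m, hm'⟩ : ∃ m, t.card = m + 1 := ⟨t.card - 1, by omega⟩
    rw [hm']
    calc ∏ j ∈ t, x j + ∑ i ∈ t, ∏ j ∈ (cons a t ha).erase i, x j
        ≤ S ^ (m + 1) + x a * S ^ m := by
          rw [hm'] at h1; rw [hm'] at h2; simp only [Nat.add_sub_cancel] at h2
          exact add_le_add h1 h2
      _ = S ^ m * (S + x a) := by ring
      _ ≤ (x a + S) ^ m * (x a + S) := by
          apply mul_le_mul (pow_le_pow_left₀ hS0.le (by linarith) _) (by linarith)
            (by linarith) (by positivity)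
      _ = (x a + S) ^ (m + 1) := by ring

open Finset in
lemma aux_scalar (n : ℕ) (hn : 0 < n) (μ : Fin n → ℝ) (hμ : ∀ i, 0 < μ i) :
    ∑ i, μ i ≤ (Nat.factorial (n - 1) : ℝ) * (∑ i, (μ i)⁻¹) ^ (n - 1) * ∏ i, μ i := by
  have hP : 0 < ∏ i, μ i := Finset.prod_pos (fun i _ => hμ i)
  have key : ∀ i : Fin n, μ i = (∏ j, μ j) * ∏ j ∈ univ.erase i, (μ j)⁻¹ := by
    intro i
    have hPe : 0 < ∏ j ∈ univ.erase i, μ j :=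
      Finset.prod_pos (fun j _ => hμ j)
    rw [Finset.prod_inv_distrib, ← Finset.mul_prod_erase univ μ (mem_univ i),
      mul_assoc, mul_inv_cancel₀ hPe.ne', mul_one]
  have hne : (univ : Finset (Fin n)).Nonempty := by
    have : Nonempty (Fin n) := ⟨⟨0, hn⟩⟩
    exact univ_nonempty
  have hcard : (univ : Finset (Fin n)).card = n := by simp
  have h2 : ∑ i, μ i ≤ (∑ i, (μ i)⁻¹) ^ (n - 1) * ∏ i, μ i := by
    calc ∑ i, μ i = (∏ j, μ j) * ∑ i, ∏ j ∈ univ.erase i, (μ j)⁻¹ := by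
          rw [Finset.mul_sum]; exact Finset.sum_congr rfl (fun i _ => key i)
      _ ≤ (∏ j, μ j) * (∑ i, (μ i)⁻¹) ^ (n - 1) := by
          apply mul_le_mul_of_nonneg_left _ hP.le
          have := aux_esym_le univ hne (fun i => (μ i)⁻¹)
            (fun i _ => inv_pos.mpr (hμ i))
          rwa [hcard] at this
      _ = (∑ i, (μ i)⁻¹) ^ (n - 1) * ∏ i, μ i := by ring
  have hfac : (1 : ℝ) ≤ (Nat.factorial (n - 1) : ℝ) := by
    exact_mod_cast Nat.one_le_iff_ne_zero.mpr (Nat.factorial_ne_zero _)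
  have hpow : 0 ≤ (∑ i, (μ i)⁻¹) ^ (n - 1) := by
    apply pow_nonneg
    exact Finset.sum_nonneg (fun i _ => (inv_pos.mpr (hμ i)).le)
  nlinarith [mul_le_mul_of_nonneg_right (mul_le_mul_of_nonneg_right hfac hpow) hP.le]

open Matrix in
lemma aux_matrix (n : ℕ) (hn : 0 < n) (D : Matrix (Fin n) (Fin n) ℂ) (hD : D.PosDef) :
    (D.trace).re ≤ (Nat.factorial (n - 1) : ℝ) * ((D⁻¹).trace).re ^ (n - 1) * (D.det).re := by
  classical
  set μ := hD.1.eigenvalues with hμdef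
  set U : Matrix (Fin n) (Fin n) ℂ := (hD.1.eigenvectorUnitary : Matrix (Fin n) (Fin n) ℂ)
    with hUdef
  have hμpos : ∀ i, 0 < μ i := hD.eigenvalues_pos
  have hU1 : U * star U = 1 := Matrix.mem_unitaryGroup_iff.mp hD.1.eigenvectorUnitary.2
  have hU2 : star U * U = 1 := Matrix.mem_unitaryGroup_iff'.mp hD.1.eigenvectorUnitary.2
  have hspec : D = U * diagonal (fun i => (μ i : ℂ)) * star U := by
    conv_lhs => rw [hD.1.spectral_theorem]
    rw [Unitary.conjStarAlgAut_apply]; rfl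
  have htr : (D.trace).re = ∑ i, μ i := by
    rw [hspec, trace_mul_comm, ← mul_assoc, hU2, one_mul, trace_diagonal]
    simp
  have hdetre : (D.det).re = ∏ i, μ i := by
    rw [hD.1.det_eq_prod_eigenvalues, ← RCLike.ofReal_prod (K := ℂ)]
    exact Complex.ofReal_re _
  have hdg : diagonal (fun i => (μ i : ℂ)) * diagonal (fun i => ((μ i : ℂ))⁻¹) = 1 := by
    rw [diagonal_mul_diagonal]
    convert Matrix.diagonal_one using 2
    funext i
    exact mul_inv_cancel₀ (by exact_mod_cast (hμpos i).ne')
  have hinv : D⁻¹ = U * diagonal (fun i => ((μ i : ℂ))⁻¹) * star U := by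
    apply Matrix.inv_eq_right_inv
    rw [hspec]
    simp only [Matrix.mul_assoc]
    rw [← Matrix.mul_assoc (star U) U, hU2, one_mul,
      ← Matrix.mul_assoc (diagonal fun i => (μ i : ℂ)), hdg, one_mul, hU1]
  have htrinv : ((D⁻¹).trace).re = ∑ i, (μ i)⁻¹ := by
    rw [hinv, trace_mul_comm, ← mul_assoc, hU2, one_mul, trace_diagonal]
    simp
  rw [htr, htrinv, hdetre]
  exact aux_scalar n hn μ hμpos

open Matrix in
lemma aux_posDef_conj {n : ℕ} {M T : Matrix (Fin n) (Fin n) ℂ} (hM : M.PosDef)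
    (hT : IsUnit T.det) (hTH : T.IsHermitian) : (T * M * T).PosDef := by
  have h1 : T * M * T = Tᴴ * M * T := by rw [hTH.eq]
  rw [h1]
  refine Matrix.PosDef.of_dotProduct_mulVec_pos (Matrix.isHermitian_conjTranspose_mul_mul T hM.1) (fun x hx => ?_)
  have hTx : T *ᵥ x ≠ 0 := by
    intro h
    apply hx
    have h2 := congrArg (fun v => T⁻¹ *ᵥ v) h
    simpa [Matrix.mulVec_mulVec, Matrix.nonsing_inv_mul _ hT] using h2
  have key : star x ⬝ᵥ (Tᴴ * M * T) *ᵥ x = star (T *ᵥ x) ⬝ᵥ M *ᵥ (T *ᵥ x) := by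
    rw [Matrix.star_mulVec, Matrix.mulVec_mulVec, Matrix.dotProduct_mulVec,
      Matrix.dotProduct_mulVec, Matrix.vecMul_vecMul, Matrix.mul_assoc]
  rw [key]
  exact hM.dotProduct_mulVec_pos hTx

open Matrix in
/-- For `n × n` positive definite Hermitian matrices `A`, `B` one has
`tr(B⁻¹ A) ≤ (n-1)! ⬝ (tr(A⁻¹ B))^(n-1) ⬝ (det A / det B)`. -/
theorem trace_inv_mul_le (n : ℕ) (hn : 0 < n)
    (A B : Matrix (Fin n) (Fin n) ℂ) (hA : A.PosDef) (hB : B.PosDef) :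
    ((B⁻¹ * A).trace).re ≤
      (Nat.factorial (n - 1) : ℝ) * ((A⁻¹ * B).trace).re ^ (n - 1) *
        ((A.det).re / (B.det).re) := by
  classical
  open MatrixOrder in set T := CFC.sqrt A with hTdef
  have hTsemi : T.PosSemidef := open MatrixOrder in (CFC.sqrt_nonneg A).posSemidef
  have hTH : T.IsHermitian := hTsemi.isHermitian
  have hTT : T * T = A := open MatrixOrder in CFC.sqrt_mul_sqrt_self A hA.posSemidef.nonneg
  have hTTdet : T.det * T.det = A.det := by rw [← Matrix.det_mul, hTT]
  have hdetA : A.det ≠ 0 := hA.det_pos.ne'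
  have hdetB : IsUnit B.det := hB.det_pos.ne'.isUnit
  have hdetT : IsUnit T.det := by
    refine isUnit_iff_ne_zero.mpr (fun h => hdetA ?_)
    rw [← hTTdet, h, mul_zero]
  set D := T * B⁻¹ * T with hDdef
  have hD : D.PosDef := aux_posDef_conj hB.inv hdetT hTH
  have hB' : B⁻¹⁻¹ = B := Matrix.nonsing_inv_nonsing_inv B hdetB
  have e1 : (B⁻¹ * A).trace = D.trace := by
    rw [← hTT, ← Matrix.mul_assoc, Matrix.trace_mul_comm, ← Matrix.mul_assoc]
  have e2 : (A⁻¹ * B).trace = (D⁻¹).trace := by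
    have hDinv : D⁻¹ = T⁻¹ * B * T⁻¹ := by
      rw [hDdef, Matrix.mul_inv_rev, Matrix.mul_inv_rev, hB', ← Matrix.mul_assoc]
    have hAinv : A⁻¹ = T⁻¹ * T⁻¹ := by rw [← hTT, Matrix.mul_inv_rev]
    rw [hAinv, hDinv, Matrix.mul_assoc, Matrix.trace_mul_comm]
  have hdet : D.det = A.det * (B.det)⁻¹ := by
    have h4 : D.det = T.det * (B.det)⁻¹ * T.det := by
      rw [hDdef, Matrix.det_mul, Matrix.det_mul, Matrix.det_nonsing_inv,
        Ring.inverse_eq_inv]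
    rw [h4, ← hTTdet]; ring
  have hAim : A.det.im = 0 := by
    have := hA.det_pos
    rw [Complex.lt_def] at this
    simpa using this.2.symm
  have hBim : B.det.im = 0 := by
    have := hB.det_pos
    rw [Complex.lt_def] at this
    simpa using this.2.symm
  have hAeq : A.det = (A.det.re : ℂ) := Complex.ext rfl (by simp [hAim])
  have hBeq : B.det = (B.det.re : ℂ) := Complex.ext rfl (by simp [hBim])
  have e3 : D.det.re = A.det.re / B.det.re := by
    have h5 : D.det = (A.det.re : ℂ) * ((B.det.re : ℂ))⁻¹ := by
      rw [hdet]
      exact congrArg₂ (· * ·) hAeq (congrArg Inv.inv hBeq)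
    rw [h5, ← Complex.ofReal_inv, ← Complex.ofReal_mul, Complex.ofReal_re,
      div_eq_mul_inv]
  rw [e1, e2, ← e3]
  exact aux_matrix n hn D hD
end

section
/- Suppose F : M × [1,∞) → ℝ satisfies sup_M F(·,t) ≤ G(t) with G(t) → 0, and suppose ∫_M F(·,t) dν = 0 for all t, where ν is a probability measure on the compact metric measure space M, and |F(x,t) − F(y,t)| ≤ A·d(x,y) for a constant A and all x, y ∈ M, t ≥ 1. If additionally M has the property that any two points are joined by a path realizing the distance and ν has the doubling-type lower bound ν(B(x,r)) ≥ c_M r^{2n} for r ≤ diam(M), then sup_M |F(·,t)| ≤ C G(t)^{1/(2n+1)} for all t sufficiently large, with C depending only on A, c_M, n and diam(M). -/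
/-- Lemma 2.4 of Tosatti–Weinkove–Yang: on a compact geodesic metric measure
space `(M, d, ν)` with `ν(M) = 1` and `ν(B(x,r)) ≥ c_M r^{2n}`, a family
`F(·,t)` which is uniformly `A`-Lipschitz, has zero `ν`-mean, and satisfies
`sup_M F(·,t) ≤ G(t)` with `G(t) → 0`, obeys
`sup_M |F(·,t)| ≤ C G(t)^{1/(2n+1)}` for all large `t`. -/
theorem twy_key_lemma (M : Type*) [MetricSpace M] [CompactSpace M] [Nonempty M]
    [MeasurableSpace M] [BorelSpace M]
    (ν : MeasureTheory.Measure M) [MeasureTheory.IsProbabilityMeasure ν]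
    (n : ℕ) (cM A : ℝ) (hcM : 0 < cM) (hA : 0 < A)
    (hvol : ∀ (x : M) (r : ℝ), 0 < r → r ≤ Metric.diam (Set.univ : Set M) →
      ENNReal.ofReal (cM * r ^ (2 * n)) ≤ ν (Metric.ball x r))
    (hgeo : ∀ x y : M, ∃ γ : ℝ → M, γ 0 = x ∧ γ (dist x y) = y ∧
      ∀ s ∈ Set.Icc (0 : ℝ) (dist x y), ∀ s' ∈ Set.Icc (0 : ℝ) (dist x y),
        dist (γ s) (γ s') = |s - s'|)
    (F : M → ℝ → ℝ) (G : ℝ → ℝ) (hG0 : ∀ t, 1 ≤ t → 0 ≤ G t)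
    (hGlim : Filter.Tendsto G Filter.atTop (nhds 0))
    (hFcont : ∀ t, 1 ≤ t → Continuous fun x => F x t)
    (hsup : ∀ t, 1 ≤ t → ∀ x, F x t ≤ G t)
    (hmean : ∀ t, 1 ≤ t → ∫ x, F x t ∂ν = 0)
    (hLip : ∀ t, 1 ≤ t → ∀ x y : M, |F x t - F y t| ≤ A * dist x y) :
    ∃ C : ℝ, 0 < C ∧ ∃ T : ℝ, 1 ≤ T ∧ ∀ t, T ≤ t → ∀ x,
      |F x t| ≤ C * G t ^ ((1 : ℝ) / (2 * n + 1)) := by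

  classical
  set K : ℝ := 2 * (2*A)^(2*n) / cM with hK
  have hKpos : 0 < K := by positivity
  set e : ℝ := (1:ℝ)/(2*(n:ℝ)+1) with he
  have hepos : 0 < e := by positivity
  have hele : e ≤ 1 := by
    rw [he, div_le_one (by positivity)]
    nlinarith [Nat.cast_nonneg (α := ℝ) n]
  refine ⟨max 1 (K ^ e), lt_of_lt_of_le one_pos (le_max_left _ _), ?_⟩
  obtain ⟨T₀, hT₀⟩ := Filter.eventually_atTop.mp
    (hGlim.eventually (eventually_le_nhds one_pos))
  refine ⟨max 1 T₀, le_max_left _ _, ?_⟩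
  intro t ht x
  have ht1 : 1 ≤ t := le_trans (le_max_left _ _) ht
  have hg1 : G t ≤ 1 := hT₀ t (le_trans (le_max_right _ _) ht)
  set g := G t with hgdef
  have hg0 : 0 ≤ g := hG0 t ht1
  have hC : K ^ e ≤ max 1 (K ^ e) := le_max_right _ _
  have hInt : MeasureTheory.Integrable (fun y => F y t) ν := (MeasureTheory.integrableOn_univ.mp ((hFcont t ht1).continuousOn.integrableOn_compact isCompact_univ))
  have hge : g ^ e ≥ 0 := Real.rpow_nonneg hg0 e
  have hgle : g ≤ max 1 (K ^ e) * g ^ e := by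
    rcases eq_or_lt_of_le hg0 with h0 | h0
    · rw [← h0, Real.zero_rpow (ne_of_gt hepos), mul_zero]
    · have h1 : g ≤ g ^ e := by
        calc g = g ^ (1:ℝ) := (Real.rpow_one g).symm
        _ ≤ g ^ e := Real.rpow_le_rpow_of_exponent_ge h0 hg1 hele
      have h2 : g ^ e ≤ max 1 (K ^ e) * g ^ e :=
        le_mul_of_one_le_left hge (le_max_left _ _)
      linarith
  rw [abs_le]
  refine ⟨?_, le_trans (hsup t ht1 x) hgle⟩
  by_contra hcon
  push_neg at hcon
  set L : ℝ := -(F x t) with hL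
  have hCg0 : 0 ≤ max 1 (K ^ e) * g ^ e := by positivity
  have hconL : max 1 (K ^ e) * g ^ e < L := by
    rw [hL]; linarith
  have hLpos : 0 < L := lt_of_le_of_lt hCg0 hconL
  set r : ℝ := L / (2*A) with hr
  have hrpos : 0 < r := by positivity
  -- maximum point has nonnegative value
  obtain ⟨y₀, -, hy₀⟩ := isCompact_univ.exists_isMaxOn Set.univ_nonempty
    (hFcont t ht1).continuousOn
  have hy₀' : ∀ y, F y t ≤ F y₀ t := fun y => hy₀ (Set.mem_univ y)
  have hmax0 : 0 ≤ F y₀ t := by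
    have h1 : ∫ y, F y t ∂ν ≤ ∫ _, F y₀ t ∂ν :=
      MeasureTheory.integral_mono hInt (MeasureTheory.integrable_const _) hy₀'
    rw [hmean t ht1, MeasureTheory.integral_const] at h1
    simpa using h1
  -- r ≤ diam
  have hdiam : r ≤ Metric.diam (Set.univ : Set M) := by
    have h1 := hLip t ht1 y₀ x
    have h2 := le_abs_self (F y₀ t - F x t)
    have h3 : dist y₀ x ≤ Metric.diam (Set.univ : Set M) :=
      Metric.dist_le_diam_of_mem isCompact_univ.isBounded (Set.mem_univ _) (Set.mem_univ _)
    have hLd : L ≤ A * Metric.diam (Set.univ : Set M) := by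
      have := mul_le_mul_of_nonneg_left h3 hA.le
      rw [hL]; linarith
    have hd0 : 0 ≤ Metric.diam (Set.univ : Set M) := Metric.diam_nonneg
    rw [hr, div_le_iff₀ (by positivity)]
    nlinarith
  -- on the ball, F ≤ -L/2
  have hball : ∀ z ∈ Metric.ball x r, F z t ≤ -(L/2) := by
    intro z hz
    have h1 := hLip t ht1 z x
    have h2 : dist z x < r := Metric.mem_ball.mp hz
    have h3 := le_abs_self (F z t - F x t)
    have h4 : A * dist z x ≤ A * r := mul_le_mul_of_nonneg_left h2.le hA.le
    have h5 : A * r = L / 2 := by rw [hr]; field_simp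
    rw [hL] at *
    linarith
  have hfin : cM * r ^ (2*n) ≤ (ν (Metric.ball x r)).toReal := by
    have h1 := ENNReal.toReal_mono (MeasureTheory.measure_ne_top ν _) (hvol x r hrpos hdiam)
    rwa [ENNReal.toReal_ofReal (by positivity)] at h1
  have hsplit := MeasureTheory.integral_add_compl
    (measurableSet_ball (x := x) (ε := r)) hInt
  have hIB : ∫ y in Metric.ball x r, F y t ∂ν ≤ (ν (Metric.ball x r)).toReal * (-(L/2)) := by
    have h1 := MeasureTheory.setIntegral_mono_on hInt.integrableOn
      (MeasureTheory.integrableOn_const (MeasureTheory.measure_ne_top ν _))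
      measurableSet_ball hball
    rwa [MeasureTheory.setIntegral_const, smul_eq_mul, MeasureTheory.measureReal_def] at h1
  have hIC : ∫ y in (Metric.ball x r)ᶜ, F y t ∂ν ≤ g := by
    have h1 := MeasureTheory.setIntegral_mono_on (s := (Metric.ball x r)ᶜ)
      (g := fun _ => g) hInt.integrableOn
      (MeasureTheory.integrableOn_const (MeasureTheory.measure_ne_top ν _))
      measurableSet_ball.compl (fun z _ => hsup t ht1 z)
    rw [MeasureTheory.setIntegral_const, smul_eq_mul, MeasureTheory.measureReal_def] at h1
    have h2 : (ν (Metric.ball x r)ᶜ).toReal ≤ 1 := by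
      have h3 := ENNReal.toReal_mono (MeasureTheory.measure_ne_top ν Set.univ)
        (MeasureTheory.measure_mono (Set.subset_univ (Metric.ball x r)ᶜ))
      simpa using h3
    nlinarith [ENNReal.toReal_nonneg (a := ν (Metric.ball x r)ᶜ)]
  have hmean0 := hmean t ht1
  have hkey : (L/2) * (cM * r ^ (2*n)) ≤ g := by
    have hB0 : (0:ℝ) ≤ (ν (Metric.ball x r)).toReal := ENNReal.toReal_nonneg
    nlinarith [mul_le_mul_of_nonneg_left hfin (le_of_lt (half_pos hLpos))]
  have hP : (0:ℝ) < (2*A)^(2*n) := by positivity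
  have hLK : L ^ (2*n+1) ≤ K * g := by
    have hr2 : r ^ (2*n) = L^(2*n) / (2*A)^(2*n) := by rw [hr, div_pow]
    rw [hr2] at hkey
    have h := mul_le_mul_of_nonneg_left hkey
      (le_of_lt (by positivity : (0:ℝ) < 2*(2*A)^(2*n) / cM))
    calc L^(2*n+1) = (2*(2*A)^(2*n)/cM) * ((L/2) * (cM * (L^(2*n)/(2*A)^(2*n)))) := by
          field_simp
          ring
    _ ≤ (2*(2*A)^(2*n)/cM) * g := h
    _ = K * g := by rw [hK]
  have hfinal : L ≤ K ^ e * g ^ e := by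
    have h1 : L = (L ^ (2*n+1) : ℝ) ^ e := by
      rw [← Real.rpow_natCast L (2*n+1), ← Real.rpow_mul hLpos.le]
      rw [he]
      push_cast
      rw [mul_one_div, div_self (by positivity : 2*(n:ℝ)+1 ≠ 0), Real.rpow_one]
    rw [h1, ← Real.mul_rpow hKpos.le hg0]
    exact Real.rpow_le_rpow (by positivity) hLK hepos.le
  have : L ≤ max 1 (K ^ e) * g ^ e :=
    le_trans hfinal (mul_le_mul_of_nonneg_right hC hge)
  linarith
end
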